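/- Let v be the first vertex of the path P satisfying the cover condition. Then for every minimum weight vertex cover C* of P: v ∈ C* if and only if Partition(v) ∩ P_{⪯v} ⊆ C*; i.e., v lies in a minimum weight vertex cover of P exactly when all vertices on its side of the bipartition preceding it do as well. -/

import Mathlib

open Finset

/-- `C` is a vertex cover of the subpath of the path `P = (v_0, …, v_{n-1})`
induced by the vertices `v_lo, v_{lo+1}, …, v_{hi-1}` (half-open interval `[lo, hi)`);
the edges of this subpath are `{v_i, v_{i+1}}` for `lo ≤ i` and `i + 1 < hi`. -/
def IsCoverOn (lo hi : ℕ) (C : Finset ℕ) : Prop :=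
  (∀ j ∈ C, lo ≤ j ∧ j < hi) ∧ ∀ i : ℕ, lo ≤ i → i + 1 < hi → (i ∈ C ∨ i + 1 ∈ C)

/-- The total weight `ω(C) = ∑_{v ∈ C} ω(v)` of a set of vertices. -/
def wsum (ω : ℕ → ℝ) (C : Finset ℕ) : ℝ := ∑ j ∈ C, ω j

/-- `C` is a minimum weight vertex cover (MWVC) of the subpath on the vertices `[lo, hi)`. -/
def IsMWVCOn (ω : ℕ → ℝ) (lo hi : ℕ) (C : Finset ℕ) : Prop :=
  IsCoverOn lo hi C ∧ ∀ D : Finset ℕ, IsCoverOn lo hi D → wsum ω C ≤ wsum ω D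

/-- `Partition(v_l) ∩ P_{⪯ v_l}`: the vertices up to (and including) `v_l` lying on the
same side of the path's bipartition as `v_l`. -/
def sameSide (l : ℕ) : Finset ℕ := (range (l + 1)).filter fun j => j % 2 = l % 2

/-- `P_{⪯ v_l} ∖ Partition(v_l)`: the vertices up to `v_l` on the opposite side. -/
def otherSide (l : ℕ) : Finset ℕ := (range (l + 1)).filter fun j => j % 2 ≠ l % 2

/-- `v_l` satisfies the (weak) cover condition. -/
def CoverCond (ω : ℕ → ℝ) (l : ℕ) : Prop := wsum ω (sameSide l) ≤ wsum ω (otherSide l)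

/-- `v_l` satisfies the strict cover condition. -/
def StrictCoverCond (ω : ℕ → ℝ) (l : ℕ) : Prop := wsum ω (sameSide l) < wsum ω (otherSide l)

/-!
If no vertex before `v_l` satisfies the cover condition, the weights of the alternating sets
ending at `v_0, v_1, …, v_{l-1}` strictly increase, and an exchange argument along the path shows
that the alternating set ending at `v_{l-1}` is the unique maximum-weight independent set of the
first `l` vertices. For a minimum cover `C` containing `v_l`, the uncovered vertices before `v_l`
form an independent set that is at least as heavy: replacing `C` on `v_0, …, v_l` by `v_l`'s side
of the bipartition is again a cover. Hence the uncovered vertices are exactly the opposite side,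
and `C` contains all of `v_l`'s side.
-/

def IsPathIndependent (I : Finset ℕ) : Prop := ∀ i ∈ I, i + 1 ∉ I

lemma IsPathIndependent.mono {I J : Finset ℕ} (hJ : IsPathIndependent J) (h : I ⊆ J) :
    IsPathIndependent I :=
  fun i hi hi1 => hJ i (h hi) (h hi1)

lemma mem_sameSide {i l : ℕ} : i ∈ sameSide l ↔ i ≤ l ∧ i % 2 = l % 2 := by
  simp [sameSide]

lemma mem_otherSide {i l : ℕ} : i ∈ otherSide l ↔ i ≤ l ∧ i % 2 ≠ l % 2 := by
  simp [otherSide]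

lemma otherSide_zero : otherSide 0 = ∅ := by
  ext i
  simp only [mem_otherSide, notMem_empty, iff_false]
  omega

lemma sameSide_zero : sameSide 0 = {0} := by
  ext i
  rw [mem_sameSide, mem_singleton]
  omega

lemma otherSide_succ (t : ℕ) : otherSide (t + 1) = sameSide t := by
  ext i
  rw [mem_otherSide, mem_sameSide]
  omega

lemma sameSide_succ (t : ℕ) : sameSide (t + 1) = insert (t + 1) (otherSide t) := by
  ext i
  rw [mem_sameSide, mem_insert, mem_otherSide]
  omega

lemma wsum_insert (ω : ℕ → ℝ) {a : ℕ} {s : Finset ℕ} (h : a ∉ s) :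
    wsum ω (insert a s) = ω a + wsum ω s :=
  sum_insert h

lemma wsum_sameSide_add_wsum_otherSide (ω : ℕ → ℝ) (l : ℕ) :
    wsum ω (sameSide l) + wsum ω (otherSide l) = wsum ω (range (l + 1)) :=
  sum_filter_add_sum_filter_not _ _ _

lemma wsum_otherSide_lt_wsum_otherSide_succ {ω : ℕ → ℝ} {t : ℕ} (h : ¬ CoverCond ω t) :
    wsum ω (otherSide t) < wsum ω (otherSide (t + 1)) := by
  rw [otherSide_succ]
  exact not_le.1 h

/-- `otherSide t` is the alternating set `…, v_{t-3}, v_{t-1}` ending just before `v_t`. -/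
theorem IsPathIndependent.wsum_lt_otherSide_or_eq {ω : ℕ → ℝ} {t : ℕ} {I : Finset ℕ}
    (hI : IsPathIndependent I) (hIt : I ⊆ range t) (hω : ∀ j < t, ¬ CoverCond ω j) :
    wsum ω I < wsum ω (otherSide t) ∨ I = otherSide t := by
  induction t using Nat.strong_induction_on generalizing I with
  | _ t ih =>
  rcases t with _ | t
  · exact Or.inr (by rw [otherSide_zero]; simpa using hIt)
  have hstep := wsum_otherSide_lt_wsum_otherSide_succ (hω t t.lt_succ_self)
  rw [range_add_one] at hIt
  by_cases htI : t ∈ I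
  · rcases t with _ | s
    · right
      rw [otherSide_succ, sameSide_zero]
      exact Subset.antisymm (by simpa using hIt) (singleton_subset_iff.2 htI)
    · have hsI : s ∉ I.erase (s + 1) := fun h => hI s (mem_of_mem_erase h) htI
      rw [range_add_one, subset_insert_iff, subset_insert_iff_of_notMem hsI] at hIt
      have hwI : wsum ω I = ω (s + 1) + wsum ω (I.erase (s + 1)) := by
        rw [← wsum_insert ω (notMem_erase _ _), insert_erase htI]
      rw [otherSide_succ, sameSide_succ, wsum_insert ω (fun h => by simp [mem_otherSide] at h)]
      rcases ih s (by omega) (hI.mono (erase_subset _ _)) hIt (fun j hj => hω j (by omega))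
        with hlt | heq
      · exact Or.inl (by linarith)
      · exact Or.inr (by rw [← heq, insert_erase htI])
  · rw [subset_insert_iff_of_notMem htI] at hIt
    left
    rcases ih t t.lt_succ_self hI hIt (fun j hj => hω j (by omega)) with hlt | heq
    · exact hlt.trans hstep
    · exact heq ▸ hstep

lemma IsCoverOn.isPathIndependent_range_sdiff {n k : ℕ} {C : Finset ℕ} (hC : IsCoverOn 0 n C)
    (hk : k ≤ n) : IsPathIndependent (range k \ C) := by
  intro i hi hi1
  simp only [mem_sdiff, mem_range] at hi hi1
  rcases hC.2 i i.zero_le (by omega) with h | h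
  exacts [hi.2 h, hi1.2 h]

lemma IsCoverOn.sdiff_range_union_sameSide {n l : ℕ} {C : Finset ℕ} (hC : IsCoverOn 0 n C)
    (hl : l < n) : IsCoverOn 0 n (C \ range (l + 1) ∪ sameSide l) := by
  refine ⟨fun j hj => ?_, fun i _ hin => ?_⟩
  · rcases mem_union.1 hj with h | h
    · exact hC.1 j (mem_sdiff.1 h).1
    · exact ⟨j.zero_le, (mem_sameSide.1 h).1.trans_lt hl⟩
  · by_cases hil : i + 1 ≤ l
    · by_cases hpar : i % 2 = l % 2
      · exact Or.inl (mem_union_right _ (mem_sameSide.2 ⟨by omega, hpar⟩))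
      · exact Or.inr (mem_union_right _ (mem_sameSide.2 ⟨hil, by omega⟩))
    · by_cases hi : i = l
      · exact Or.inl (mem_union_right _ (mem_sameSide.2 ⟨hi.le, by rw [hi]⟩))
      · rcases hC.2 i i.zero_le hin with h | h
        · exact Or.inl (mem_union_left _ (mem_sdiff.2 ⟨h, by rw [mem_range]; omega⟩))
        · exact Or.inr (mem_union_left _ (mem_sdiff.2 ⟨h, by rw [mem_range]; omega⟩))

lemma IsMWVCOn.wsum_otherSide_le_wsum_range_sdiff {ω : ℕ → ℝ} {n l : ℕ} {C : Finset ℕ}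
    (hC : IsMWVCOn ω 0 n C) (hl : l < n) :
    wsum ω (otherSide l) ≤ wsum ω (range (l + 1) \ C) := by
  have hexchange := hC.2 _ (hC.1.sdiff_range_union_sameSide hl)
  have hdisj : Disjoint (C \ range (l + 1)) (sameSide l) :=
    disjoint_left.2 fun j hj hj' =>
      (mem_sdiff.1 hj).2 (mem_range.2 (Nat.lt_succ_of_le (mem_sameSide.1 hj').1))
  have hsplitC : wsum ω (C ∩ range (l + 1)) + wsum ω (C \ range (l + 1)) = wsum ω C :=
    sum_inter_add_sum_sdiff _ _ _
  have hsplitR : wsum ω (range (l + 1) ∩ C) + wsum ω (range (l + 1) \ C) =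
      wsum ω (range (l + 1)) :=
    sum_inter_add_sum_sdiff _ _ _
  have hunion : wsum ω (C \ range (l + 1) ∪ sameSide l) =
      wsum ω (C \ range (l + 1)) + wsum ω (sameSide l) :=
    sum_union hdisj
  rw [inter_comm] at hsplitR
  linarith [wsum_sameSide_add_wsum_otherSide ω l]

theorem stmt_7_general (n l : ℕ) (ω : ℕ → ℝ) (hl : l < n)
    (hfirst : ∀ j, j < l → ¬ CoverCond ω j) :
    ∀ C : Finset ℕ, IsMWVCOn ω 0 n C → (l ∈ C ↔ sameSide l ⊆ C) := by
  intro C hC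
  refine ⟨fun hlC => ?_, fun h => h (mem_sameSide.2 ⟨le_rfl, rfl⟩)⟩
  have hJl : range (l + 1) \ C ⊆ range l := by
    intro j hj
    obtain ⟨hjl, hjC⟩ := mem_sdiff.1 hj
    have hjne : j ≠ l := by rintro rfl; exact hjC hlC
    rw [mem_range] at hjl ⊢
    omega
  have hJ : range (l + 1) \ C = otherSide l :=
    ((hC.1.isPathIndependent_range_sdiff hl).wsum_lt_otherSide_or_eq hJl hfirst).resolve_left
      (hC.wsum_otherSide_le_wsum_range_sdiff hl).not_gt
  intro j hj
  by_contra hjC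
  have hjJ : j ∈ range (l + 1) \ C :=
    mem_sdiff.2 ⟨mem_range.2 (Nat.lt_succ_of_le (mem_sameSide.1 hj).1), hjC⟩
  rw [hJ, mem_otherSide] at hjJ
  exact hjJ.2 (mem_sameSide.1 hj).2

/-- Let `v_l` be the first vertex of the path satisfying the cover
condition. Then for every MWVC `C` of the whole path: `v_l ∈ C` if and only if all of
`Partition(v_l) ∩ P_{⪯ v_l}` is contained in `C`. -/
theorem stmt_7 (n l : ℕ) (ω : ℕ → ℝ) (hl : l < n)
    (hcc : CoverCond ω l) (hfirst : ∀ j, j < l → ¬ CoverCond ω j) :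
    ∀ C : Finset ℕ, IsMWVCOn ω 0 n C → (l ∈ C ↔ sameSide l ⊆ C) :=
  stmt_7_general n l ω hl hfirst
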